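/- The continued fraction expansion of a quadratic irrational number in (0,1) is eventually periodic. -/

import Mathlib

/-!
Write `x (n + 1) = 1 / x n - a n`. Substituting `t = 1 / (s + a n)` into an integer quadratic
with root `x n` gives one with root `x (n + 1)` and the same discriminant `D`, and the other roots
`y n` obey the same recursion. Two points of `(0, 1)` with the same digits for ever coincide,
because the recursion expands their distance geometrically; so eventually `y n < 0 < x n`, whence
`A C < 0` and `D = B² - 4 A C` bounds all coefficients. The orbit of the Gauss map then lies in a
finite set, so it is eventually periodic, and so are its digits.
-/

open Filter Set

structure IntQuadratic where
  A : ℤ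
  B : ℤ
  C : ℤ

namespace IntQuadratic

variable (q : IntQuadratic) {t : ℝ}

def eval (t : ℝ) : ℝ := q.A * t ^ 2 + q.B * t + q.C

def disc : ℤ := discrim q.A q.B q.C

-- Substitute `t = 1 / (s + k)` and clear denominators.
def shift (k : ℤ) : IntQuadratic := ⟨q.C, q.B + 2 * q.C * k, q.A + q.B * k + q.C * k ^ 2⟩

noncomputable def otherRoot (t : ℝ) : ℝ := -q.B / q.A - t

def shifts (a : ℕ → ℤ) : ℕ → IntQuadratic
  | 0 => q
  | n + 1 => (shifts a n).shift (a n)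

lemma disc_shift (k : ℤ) : (q.shift k).disc = q.disc := by
  simp only [disc, shift, discrim]
  ring

lemma disc_shifts (a : ℕ → ℤ) (n : ℕ) : (q.shifts a n).disc = q.disc := by
  induction n with
  | zero => rfl
  | succ n ih => rw [shifts, disc_shift, ih]

lemma eval_shift_one_div_sub (k : ℤ) (ht : t ≠ 0) :
    (q.shift k).eval (1 / t - k) = q.eval t / t ^ 2 := by
  simp only [eval, shift]
  push_cast
  field_simp
  ring

lemma C_ne_zero (hA : q.A ≠ 0) (ht : Irrational t) (hq : q.eval t = 0) : q.C ≠ 0 := by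
  intro hC
  have hfactor : t * (q.A * t + q.B) = 0 := by
    simp only [eval, hC, Int.cast_zero] at hq
    linear_combination hq
  rcases mul_eq_zero.1 hfactor with h | h
  · exact ht.ne_zero h
  · exact ((ht.intCast_mul hA).add_intCast q.B).ne_zero h

lemma A_mul_mul_otherRoot (hA : q.A ≠ 0) (hq : q.eval t = 0) :
    q.A * (t * q.otherRoot t) = q.C := by
  simp only [eval, otherRoot] at hq ⊢
  field_simp
  linear_combination -hq

lemma otherRoot_ne_self (hA : q.A ≠ 0) (ht : Irrational t) : q.otherRoot t ≠ t := by
  intro h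
  have h2A : (2 * q.A : ℤ) ≠ 0 := by positivity
  apply ((ht.intCast_mul h2A).add_intCast q.B).ne_zero
  simp only [otherRoot] at h
  field_simp at h
  push_cast
  linear_combination -h

lemma otherRoot_shift (hA : q.A ≠ 0) (hC : q.C ≠ 0) (hq : q.eval t = 0) (k : ℤ) :
    (q.shift k).otherRoot (1 / t - k) = 1 / q.otherRoot t - k := by
  have ht : t ≠ 0 := by
    rintro rfl
    exact hC (by simpa [eval] using hq)
  have hy : q.otherRoot t ≠ 0 := by
    intro hy
    have := q.A_mul_mul_otherRoot hA hq
    rw [hy, mul_zero, mul_zero] at this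
    exact hC (by exact_mod_cast this.symm)
  have hA' : (q.A : ℝ) ≠ 0 := by exact_mod_cast hA
  have hC' : (q.C : ℝ) ≠ 0 := by exact_mod_cast hC
  have hinv : 1 / q.otherRoot t = q.A * t / q.C := by
    rw [← q.A_mul_mul_otherRoot hA hq]
    field_simp
  rw [hinv]
  simp only [eval, shift, otherRoot] at hq ⊢
  push_cast
  field_simp
  linear_combination -hq

lemma A_mul_C_neg (hA : q.A ≠ 0) (hq : q.eval t = 0) (ht : 0 < t) (hy : q.otherRoot t < 0) :
    q.A * q.C < 0 := by
  have : (q.A * q.C : ℝ) < 0 := by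
    rw [← q.A_mul_mul_otherRoot hA hq, ← mul_assoc]
    have hA2 : (0 : ℝ) < q.A * q.A := mul_self_pos.2 (by exact_mod_cast hA)
    nlinarith [mul_neg_of_pos_of_neg ht hy]
  exact_mod_cast this

lemma abs_le_disc_of_A_mul_C_neg (h : q.A * q.C < 0) :
    |q.A| ≤ q.disc ∧ |q.B| ≤ q.disc ∧ |q.C| ≤ q.disc := by
  have hAC : |q.A| * |q.C| = -(q.A * q.C) := by rw [← abs_mul, abs_of_neg h]
  have hA : 1 ≤ |q.A| := Int.one_le_abs (left_ne_zero_of_mul h.ne)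
  have hC : 1 ≤ |q.C| := Int.one_le_abs (right_ne_zero_of_mul h.ne)
  have hB : |q.B| ≤ q.B ^ 2 := by
    rw [← sq_abs]; nlinarith [abs_nonneg q.B]
  simp only [disc, discrim]
  refine ⟨?_, ?_, ?_⟩ <;> nlinarith [sq_nonneg q.B]

lemma finite_setOf_eval_eq_zero (hA : q.A ≠ 0) : {t | q.eval t = 0}.Finite := by
  have hp : (Polynomial.C (q.A : ℝ) * Polynomial.X ^ 2 + Polynomial.C (q.B : ℝ) * Polynomial.X +
      Polynomial.C (q.C : ℝ)) ≠ 0 := by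
    intro h
    have := congrArg (Polynomial.coeff · 2) h
    simp only [Polynomial.coeff_add, Polynomial.coeff_C_mul, Polynomial.coeff_X_pow,
      Polynomial.coeff_X, Polynomial.coeff_C] at this
    norm_num at this
    exact hA this
  refine (Polynomial.finite_setOfPred_isRoot hp).subset fun t ht => ?_
  simpa [eval] using ht

lemma finite_setOf_abs_le (K : ℤ) :
    {q : IntQuadratic | |q.A| ≤ K ∧ |q.B| ≤ K ∧ |q.C| ≤ K}.Finite := by
  refine (((finite_Icc (-K) K).prod ((finite_Icc (-K) K).prod (finite_Icc (-K) K))).image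
    fun p => (⟨p.1, p.2.1, p.2.2⟩ : IntQuadratic)).subset ?_
  rintro ⟨A, B, C⟩ ⟨hA, hB, hC⟩
  exact ⟨(A, B, C), ⟨abs_le.1 hA, abs_le.1 hB, abs_le.1 hC⟩, rfl⟩

lemma finite_setOf_root_of_abs_le (K : ℤ) :
    {t : ℝ | ∃ q : IntQuadratic, q.A ≠ 0 ∧ (|q.A| ≤ K ∧ |q.B| ≤ K ∧ |q.C| ≤ K) ∧
      q.eval t = 0}.Finite := by
  refine (((finite_setOf_abs_le K).inter_of_left {q | q.A ≠ 0}).biUnion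
    fun q hq => q.finite_setOf_eval_eq_zero hq.2).subset ?_
  rintro t ⟨q, hA, hK, hq⟩
  exact mem_biUnion ⟨hK, hA⟩ hq

end IntQuadratic

lemma Irrational.fract_mem_Ioo {t : ℝ} (h : Irrational t) : Int.fract t ∈ Ioo 0 1 :=
  ⟨Int.fract_pos.2 (h.ne_int _), Int.fract_lt_one t⟩

lemma Irrational.fract {t : ℝ} (h : Irrational t) : Irrational (Int.fract t) := by
  rw [← Int.self_sub_floor]
  exact h.sub_intCast _

lemma mul_le_one_sub_abs_sub {x y : ℝ} (hx : x ∈ Ioo 0 1) (hy : y ∈ Ioo 0 1) :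
    x * y ≤ 1 - |x - y| := by
  rcases abs_cases (x - y) with ⟨h, -⟩ | ⟨h, -⟩ <;> rw [h] <;>
    nlinarith [hx.1, hx.2, hy.1, hy.2]

section GaussOrbit

variable {x y : ℕ → ℝ} {a : ℕ → ℤ}

lemma eq_of_forall_mem_Ioo (hx : ∀ n, x n ∈ Ioo 0 1) (hy : ∀ n, y n ∈ Ioo 0 1)
    (hxs : ∀ n, x (n + 1) = 1 / x n - a n) (hys : ∀ n, y (n + 1) = 1 / y n - a n) :
    x 0 = y 0 := by
  by_contra hne
  set δ := |x 0 - y 0|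
  have hδ : 0 < δ := abs_pos.2 (sub_ne_zero.2 hne)
  have hdist_lt : ∀ n, |x n - y n| < 1 := fun n =>
    abs_sub_lt_iff.2 ⟨by linarith [(hx n).2, (hy n).1], by linarith [(hx n).1, (hy n).2]⟩
  have hδ1 : 0 < 1 - δ := by linarith [hdist_lt 0]
  have hdist_succ : ∀ n, |x (n + 1) - y (n + 1)| = |x n - y n| / (x n * y n) := by
    intro n
    have hxy : 0 < x n * y n := mul_pos (hx n).1 (hy n).1
    rw [hxs, hys, sub_sub_sub_cancel_right, div_sub_div _ _ (hx n).1.ne' (hy n).1.ne',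
      abs_div, abs_of_pos hxy, one_mul, mul_one, abs_sub_comm]
  -- Each step multiplies the distance by `1 / (x n * y n) ≥ 1 / (1 - δ)`.
  have hgrowth : ∀ n, δ ≤ |x n - y n| * (1 - δ) ^ n := by
    intro n
    induction n with
    | zero => simp [δ]
    | succ n ih =>
      have hpow : (1 - δ) ^ n ≤ 1 := pow_le_one₀ hδ1.le (by linarith)
      have hδn : δ ≤ |x n - y n| := by nlinarith [abs_nonneg (x n - y n)]
      have hxy : 0 < x n * y n := mul_pos (hx n).1 (hy n).1
      have hxy_le : x n * y n ≤ 1 - δ := by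
        linarith [mul_le_one_sub_abs_sub (hx n) (hy n)]
      rw [hdist_succ, pow_succ]
      calc δ ≤ |x n - y n| * (1 - δ) ^ n := ih
        _ ≤ |x n - y n| / (x n * y n) * ((1 - δ) ^ n * (1 - δ)) := by
          rw [div_mul_eq_mul_div, le_div_iff₀ hxy]
          have hprod : 0 ≤ |x n - y n| * (1 - δ) ^ n := by positivity
          linarith [mul_le_mul_of_nonneg_left hxy_le hprod]
  obtain ⟨n, hn⟩ := exists_pow_lt_of_lt_one hδ (by linarith : 1 - δ < 1)
  nlinarith [hgrowth n, hdist_lt n, pow_pos hδ1 n]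

lemma eventually_neg_of_ne (hx : ∀ n, x n ∈ Ioo 0 1) (hy : ∀ n, y n ≠ 0)
    (hxs : ∀ n, x (n + 1) = 1 / x n - a n) (hys : ∀ n, y (n + 1) = 1 / y n - a n)
    (hne : x 0 ≠ y 0) : ∀ᶠ n in atTop, y n < 0 := by
  have ha : ∀ n, (1 : ℝ) ≤ a n := by
    intro n
    have h : (0 : ℝ) < a n := by
      have := one_lt_one_div (hx n).1 (hx n).2
      linarith [hxs n, (hx (n + 1)).2]
    exact_mod_cast (show (0 : ℤ) < a n by exact_mod_cast h)
  have hstep : ∀ n, y n < 0 → y (n + 1) < 0 := fun n hn => by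
    rw [hys]
    linarith [one_div_neg.2 hn, ha n]
  obtain ⟨n, hn⟩ : ∃ n, y n < 0 := by
    by_contra! hnonneg
    have hpos : ∀ n, 0 < y n := fun n => (hnonneg n).lt_of_ne' (hy n)
    refine hne (eq_of_forall_mem_Ioo hx (fun n => ⟨hpos n, ?_⟩) hxs hys)
    by_contra! hge
    have : 1 / y n ≤ 1 := by rw [div_le_one (hpos n)]; exact hge
    linarith [hys n, hpos (n + 1), ha n]
  exact eventually_atTop.2 ⟨n, fun m hm => Nat.le_induction hn (fun k _ => hstep k) m hm⟩

end GaussOrbit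

lemma exists_periodic_of_eventually_mem_finite {α : Type*} {f : α → α} {x : ℕ → α}
    (hxs : ∀ n, x (n + 1) = f (x n)) {s : Set α} (hs : s.Finite)
    (hx : ∀ᶠ n in atTop, x n ∈ s) :
    ∃ l m : ℕ, 0 < m ∧ ∀ n ≥ l, x (n + m) = x n := by
  obtain ⟨N, hN⟩ := eventually_atTop.1 hx
  obtain ⟨i, j, hij, hxij⟩ :=
    hs.exists_lt_map_eq_of_forall_mem (f := fun k => x (N + k)) fun k => hN _ (N.le_add_right k)
  refine ⟨N + i, j - i, Nat.sub_pos_of_lt hij, fun n hn => ?_⟩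
  induction n, hn using Nat.le_induction with
  | base => rw [show N + i + (j - i) = N + j by omega]; exact hxij.symm
  | succ n _ ih => rw [show n + 1 + (j - i) = n + (j - i) + 1 by omega, hxs, ih, hxs]

lemma exists_finite_eventually_mem_of_eval_eq_zero {x : ℕ → ℝ} {a : ℕ → ℤ}
    (hx : ∀ n, x n ∈ Ioo 0 1) (hirr : ∀ n, Irrational (x n))
    (hxs : ∀ n, x (n + 1) = 1 / x n - a n) (q : IntQuadratic) (hA : q.A ≠ 0)
    (hq : q.eval (x 0) = 0) : ∃ s : Set ℝ, s.Finite ∧ ∀ᶠ n in atTop, x n ∈ s := by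
  set Q := q.shifts a
  have hQ : ∀ n, (Q n).A ≠ 0 ∧ (Q n).eval (x n) = 0 := by
    intro n
    induction n with
    | zero => exact ⟨hA, hq⟩
    | succ n ih =>
      refine ⟨(Q n).C_ne_zero ih.1 (hirr n) ih.2, ?_⟩
      rw [hxs, show Q (n + 1) = (Q n).shift (a n) from rfl,
        IntQuadratic.eval_shift_one_div_sub _ _ (hx n).1.ne', ih.2, zero_div]
  have hC : ∀ n, (Q n).C ≠ 0 := fun n => (Q n).C_ne_zero (hQ n).1 (hirr n) (hQ n).2
  set y := fun n => (Q n).otherRoot (x n)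
  have hy : ∀ n, y n ≠ 0 := by
    intro n hy0
    have := (Q n).A_mul_mul_otherRoot (hQ n).1 (hQ n).2
    simp only [y] at hy0
    rw [hy0, mul_zero, mul_zero] at this
    exact hC n (by exact_mod_cast this.symm)
  have hys : ∀ n, y (n + 1) = 1 / y n - a n := fun n => by
    simp only [y, hxs n]
    exact (Q n).otherRoot_shift (hQ n).1 (hC n) (hQ n).2 (a n)
  refine ⟨_, IntQuadratic.finite_setOf_root_of_abs_le q.disc, ?_⟩
  filter_upwards [eventually_neg_of_ne hx hy hxs hys
    ((q.otherRoot_ne_self hA (hirr 0)).symm)] with n hn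
  refine ⟨Q n, (hQ n).1, ?_, (hQ n).2⟩
  rw [← q.disc_shifts a n]
  exact (Q n).abs_le_disc_of_A_mul_C_neg
    ((Q n).A_mul_C_neg (hQ n).1 (hQ n).2 (hx n).1 hn)

/-- The continued fraction expansion (via the Gauss map) of a quadratic
irrational in `(0,1)` is eventually periodic. -/
theorem quadratic_cf_eventually_periodic
    (Ω : ℝ) (hΩ : Ω ∈ Set.Ioo (0 : ℝ) 1) (hirr : Irrational Ω)
    (hquad : ∃ a b c : ℤ, a ≠ 0 ∧ (a : ℝ) * Ω ^ 2 + b * Ω + c = 0)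
    (x : ℕ → ℝ) (a : ℕ → ℤ)
    (hx0 : x 0 = Ω)
    (ha : ∀ n, a n = ⌊1 / x n⌋)
    (hxs : ∀ n, x (n + 1) = 1 / x n - ⌊1 / x n⌋) :
    ∃ l m : ℕ, 0 < m ∧ ∀ n ≥ l, a (n + m) = a n := by
  obtain ⟨A, B, C, hA, hq⟩ := hquad
  have hx : ∀ n, x n ∈ Ioo 0 1 ∧ Irrational (x n) := by
    intro n
    induction n with
    | zero => exact hx0 ▸ ⟨hΩ, hirr⟩
    | succ n ih =>
      have h := ih.2.inv
      rw [← one_div] at h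
      rw [hxs, Int.self_sub_floor]
      exact ⟨h.fract_mem_Ioo, h.fract⟩
  have hxa : ∀ n, x (n + 1) = 1 / x n - a n := fun n => by rw [hxs, ha]
  obtain ⟨s, hs, hxs_mem⟩ := exists_finite_eventually_mem_of_eval_eq_zero
    (fun n => (hx n).1) (fun n => (hx n).2) hxa ⟨A, B, C⟩ hA (hx0 ▸ hq)
  obtain ⟨l, m, hm, hper⟩ := exists_periodic_of_eventually_mem_finite
    (f := fun t : ℝ => 1 / t - ⌊1 / t⌋) hxs hs hxs_mem
  exact ⟨l, m, hm, fun n hn => by rw [ha, ha, hper n hn]⟩
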